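/- Let P be a bounded linear operator on a Banach space X with ‖P − λI‖ ≤ 1 and suppose there is a dense subspace D ⊆ X with D = ⋃_{n≥0} ker((P−λI)^n). Suppose additionally P − λI is surjective on X. Then by Herzog–Schmoeger's theorem, for every t ≠ 0 the operator e^{t(P−λI)} (defined by the convergent exponential series) is hypercyclic on X. -/

import Mathlib

/-!
Write `T = P - λ I`. By Birkhoff's transitivity argument (Baire category) it suffices to find,
for `u`, `w` in the generalized kernel `⋃ₘ ker Tᵐ` and `δ > 0`, a point `y` that is `δ`-close to
`u` and some `n` with `exp(ntT) y` `δ`-close to `w`; then `y = exp(-ntT) r₁ + r₂` works as soon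
as `exp(-ntT) r₁ ≈ u` and `exp(ntT) r₂ ≈ w` with `r₁`, `r₂` small.

The core estimate: for `w ∈ ker Tᵐ` and `|z|` large there is a small `r` with `exp(zT) r ≈ w`.
By the open mapping theorem pick `s` with `T^q s = w` and `‖T^k s‖ ≤ C^(q-k) ‖w‖`, and put
`r = (q!/z^q) s`. Then `exp(zT) r` is `w` plus terms of size `(qC/|z|)^(q-k) ‖w‖` (`k < q`) plus
a vector `E ∈ ker T^(m-1)` whose size is controlled by powers of `|z|/(q+1)`. Taking `q ≈ ρ|z|`
with `ρ` small makes the first terms small while keeping `E` bounded, and induction on `m`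
absorbs `E`.
-/

open Set NormedSpace Finset TopologicalSpace
open scoped Nat

theorem exists_dense_orbit_of_forall_exists_iterate {Y : Type*} [TopologicalSpace Y]
    [BaireSpace Y] [SecondCountableTopology Y] [Nonempty Y] {f : Y → Y} (hf : Continuous f)
    (htrans : ∀ U V : Set Y, IsOpen U → U.Nonempty → IsOpen V → V.Nonempty →
      ∃ n, (U ∩ f^[n] ⁻¹' V).Nonempty) :
    ∃ y, Dense (range fun n => f^[n] y) := by
  let W : countableBasis Y → Set Y := fun V => ⋃ n, f^[n] ⁻¹' V
  have hW_open (V) : IsOpen (W V) :=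
    isOpen_iUnion fun n => (isOpen_of_mem_countableBasis V.2).preimage (hf.iterate n)
  have hW_dense (V) : Dense (W V) := dense_iff_inter_open.2 fun U hU hU_ne => by
    obtain ⟨n, hn⟩ := htrans U V hU hU_ne (isOpen_of_mem_countableBasis V.2)
      (nonempty_of_mem_countableBasis V.2)
    exact hn.mono (inter_subset_inter_right _ (subset_iUnion _ n))
  obtain ⟨y, hy⟩ := (dense_iInter_of_isOpen hW_open hW_dense).nonempty
  refine ⟨y, (isBasis_countableBasis Y).dense_iff.2 fun V hV _ => ?_⟩
  obtain ⟨n, hn⟩ := mem_iUnion.1 (mem_iInter.1 hy ⟨V, hV⟩)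
  exact ⟨_, hn, n, rfl⟩

theorem sum_range_pow_sub_le {a : ℝ} (ha₀ : 0 ≤ a) (ha : a ≤ 1 / 2) (q : ℕ) :
    ∑ k ∈ range q, a ^ (q - k) ≤ 2 * a := by
  have hreflect : ∑ k ∈ range q, a ^ (q - k) = a * ∑ i ∈ range q, a ^ i := by
    rw [mul_sum, ← sum_range_reflect]
    refine sum_congr rfl fun k hk => ?_
    rw [← pow_succ', show q - (q - 1 - k) = k + 1 by have := mem_range.1 hk; omega]
  calc ∑ k ∈ range q, a ^ (q - k) = a * ∑ i ∈ range q, a ^ i := hreflect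
    _ ≤ a * ∑ i ∈ range q, (1 / 2) ^ i := by gcongr
    _ ≤ a * 2 := by gcongr; exact sum_geometric_two_le q
    _ = 2 * a := mul_comm _ _

theorem exists_nat_div_le_and_div_add_one_le {ρ x : ℝ} (hρ : 0 < ρ) (hx : ρ⁻¹ ≤ x) :
    ∃ q : ℕ, 1 ≤ q ∧ q / x ≤ ρ ∧ x / (q + 1) ≤ ρ⁻¹ := by
  have hx₀ : 0 < x := (inv_pos.2 hρ).trans_le hx
  refine ⟨⌊ρ * x⌋₊, Nat.one_le_floor_iff _ |>.2 ?_, ?_, ?_⟩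
  · rwa [← inv_mul_le_iff₀ hρ, mul_one]
  · rw [div_le_iff₀ hx₀]
    exact Nat.floor_le (by positivity)
  · rw [div_le_iff₀ (by positivity), le_inv_mul_iff₀ hρ]
    exact (Nat.lt_floor_add_one _).le

section ExpCoeff

variable {𝕜 : Type*} [RCLike 𝕜]

/-- The coefficient of `T ^ k s` in `exp (z • T) ((q! / z ^ q) • s)`. -/
def normalizedExpCoeff (q : ℕ) (z : 𝕜) (k : ℕ) : 𝕜 := q ! / z ^ q * (z ^ k / k !)

theorem normalizedExpCoeff_self {z : 𝕜} (hz : z ≠ 0) (q : ℕ) : normalizedExpCoeff q z q = 1 := by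
  have : (q ! : 𝕜) ≠ 0 := Nat.cast_ne_zero.2 q.factorial_ne_zero
  simp only [normalizedExpCoeff]
  field_simp

theorem norm_normalizedExpCoeff_le_of_le {z : 𝕜} (hz : z ≠ 0) {q k : ℕ} (hk : k ≤ q) :
    ‖normalizedExpCoeff q z k‖ ≤ ((q : ℝ) / ‖z‖) ^ (q - k) := by
  obtain ⟨i, rfl⟩ := Nat.exists_eq_add_of_le hk
  have hz' : 0 < ‖z‖ := norm_pos_iff.2 hz
  have hfact : ((k + i) ! : ℝ) ≤ k ! * ((k + i : ℕ) : ℝ) ^ i := by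
    rw [← Nat.factorial_mul_descFactorial (Nat.le_add_left i k), Nat.add_sub_cancel]
    exact_mod_cast Nat.mul_le_mul_left _ (Nat.descFactorial_le_pow _ _)
  rw [Nat.add_sub_cancel_left, div_pow, le_div_iff₀ (by positivity)]
  simp only [normalizedExpCoeff, norm_mul, norm_div, norm_pow, RCLike.norm_natCast, pow_add]
  field_simp
  exact_mod_cast hfact

theorem norm_normalizedExpCoeff_add_le {z : 𝕜} (hz : z ≠ 0) (q j : ℕ) :
    ‖normalizedExpCoeff q z (q + j)‖ ≤ (‖z‖ / (q + 1)) ^ j := by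
  have hz' : 0 < ‖z‖ := norm_pos_iff.2 hz
  have hfact : (q ! : ℝ) * (q + 1) ^ j ≤ (q + j) ! := by
    exact_mod_cast Nat.factorial_mul_pow_le_factorial
  rw [div_pow, le_div_iff₀ (by positivity)]
  simp only [normalizedExpCoeff, norm_mul, norm_div, norm_pow, RCLike.norm_natCast, pow_add]
  field_simp
  nlinarith [pow_pos hz' j]

end ExpCoeff

section ExpAlgebra

variable {𝕜 𝔸 : Type*} [RCLike 𝕜] [NormedRing 𝔸] [NormedAlgebra 𝕜 𝔸] [CompleteSpace 𝔸]

theorem exp_smul_pow (x : 𝔸) (t : 𝕜) (n : ℕ) : exp (t • x) ^ n = exp ((n * t) • x) := by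
  let := NormedAlgebra.restrictScalars ℚ 𝕜 𝔸
  rw [← exp_nsmul, ← Nat.cast_smul_eq_nsmul 𝕜, smul_smul]

theorem exp_smul_mul_exp_neg_smul (x : 𝔸) (z : 𝕜) : exp (z • x) * exp (-z • x) = 1 := by
  let := NormedAlgebra.restrictScalars ℚ 𝕜 𝔸
  rw [← exp_add_of_commute ((Commute.refl x).smul_left z |>.smul_right (-z)), ← add_smul,
    add_neg_cancel, zero_smul, exp_zero]

end ExpAlgebra

section Operator

variable {𝕜 X : Type*} [RCLike 𝕜] [NormedAddCommGroup X] [NormedSpace 𝕜 X]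

theorem exists_pow_apply_eq_forall_norm_pow_apply_le {T : X →L[𝕜] X} {C : ℝ} (hC : 0 ≤ C)
    (hT : ∀ y, ∃ x, T x = y ∧ ‖x‖ ≤ C * ‖y‖) (q : ℕ) (w : X) :
    ∃ s, (T ^ q) s = w ∧ ∀ k ≤ q, ‖(T ^ k) s‖ ≤ C ^ (q - k) * ‖w‖ := by
  induction q generalizing w with
  | zero => exact ⟨w, by simp, fun k hk => by simp [Nat.le_zero.1 hk]⟩
  | succ q ih =>
    obtain ⟨x, rfl, hx⟩ := hT w
    obtain ⟨s, rfl, hs⟩ := ih x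
    have hsucc : (T ^ (q + 1)) s = T ((T ^ q) s) := by rw [pow_succ', mul_apply_eq_comp]
    refine ⟨s, hsucc, fun k hk => ?_⟩
    rcases hk.eq_or_lt with rfl | hk
    · simp [hsucc]
    · calc ‖(T ^ k) s‖ ≤ C ^ (q - k) * ‖(T ^ q) s‖ := hs k (Nat.lt_succ_iff.1 hk)
        _ ≤ C ^ (q - k) * (C * ‖T ((T ^ q) s)‖) := by gcongr
        _ = C ^ (q + 1 - k) * ‖T ((T ^ q) s)‖ := by
          rw [← mul_assoc, ← pow_succ, Nat.sub_add_comm (Nat.lt_succ_iff.1 hk)]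

variable [CompleteSpace X]

theorem exp_smul_apply_eq_sum_of_pow_apply_eq_zero {T : X →L[𝕜] X} {M : ℕ} {x : X}
    (hx : (T ^ M) x = 0) (z : 𝕜) :
    exp (z • T) x = ∑ k ∈ range M, (z ^ k / k !) • (T ^ k) x := by
  have hsum := (exp_series_hasSum_exp' (𝕂 := 𝕜) (z • T)).mapL (ContinuousLinearMap.apply 𝕜 X x)
  refine hsum.unique (hasSum_sum_of_ne_finset_zero fun k hk => ?_) |>.trans
    (sum_congr rfl fun k _ => ?_)
  · have hk : (T ^ k) x = 0 := by
      rw [← Nat.sub_add_cancel (not_lt.1 (mem_range.not.1 hk)), pow_add, mul_apply_eq_comp, hx,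
        map_zero]
    simp only [ContinuousLinearMap.apply_apply, smul_pow, smul_apply, hk, smul_zero]
  · simp only [ContinuousLinearMap.apply_apply, smul_pow, smul_apply, smul_smul, div_eq_inv_mul]

theorem exp_smul_apply_eq_sum_add_sum {T : X →L[𝕜] X} {z : 𝕜} (hz : z ≠ 0) {q m : ℕ} {s w : X}
    (hs : (T ^ q) s = w) (hw : (T ^ (m + 1)) w = 0) :
    exp (z • T) ((q ! / z ^ q : 𝕜) • s) = ∑ k ∈ range q, normalizedExpCoeff q z k • (T ^ k) s
      + w + ∑ j ∈ range m, normalizedExpCoeff q z (q + (j + 1)) • (T ^ (j + 1)) w := by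
  have hshift (j : ℕ) : (T ^ (q + j)) s = (T ^ j) w := by
    rw [add_comm, pow_add, mul_apply_eq_comp, hs]
  have hs₀ : (T ^ (q + (m + 1))) s = 0 := by rw [hshift, hw]
  rw [map_smul, exp_smul_apply_eq_sum_of_pow_apply_eq_zero hs₀, smul_sum, sum_range_add,
    sum_range_succ', add_assoc, add_comm (∑ j ∈ range m, _)]
  simp only [smul_smul, add_zero, hs, ← normalizedExpCoeff.eq_1, normalizedExpCoeff_self hz,
    one_smul, hshift]

theorem exists_norm_exp_smul_apply_sub_sub_le {T : X →L[𝕜] X} {C : ℝ} (hC : 0 ≤ C)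
    (hT : ∀ y, ∃ x, T x = y ∧ ‖x‖ ≤ C * ‖y‖) {z : 𝕜} (hz : z ≠ 0) (q m : ℕ) {w : X}
    (hw : (T ^ (m + 1)) w = 0) :
    ∃ r E, (T ^ m) E = 0 ∧ ‖r‖ ≤ (q * C / ‖z‖) ^ q * ‖w‖ ∧
      ‖E‖ ≤ (∑ j ∈ range m, (‖z‖ / (q + 1)) ^ (j + 1) * ‖T ^ (j + 1)‖) * ‖w‖ ∧
      ‖exp (z • T) r - w - E‖ ≤ (∑ k ∈ range q, (q * C / ‖z‖) ^ (q - k)) * ‖w‖ := by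
  obtain ⟨s, hs, hs_le⟩ := exists_pow_apply_eq_forall_norm_pow_apply_le hC hT q w
  have hhead (k : ℕ) (hk : k ≤ q) :
      ‖normalizedExpCoeff q z k • (T ^ k) s‖ ≤ (q * C / ‖z‖) ^ (q - k) * ‖w‖ :=
    calc ‖normalizedExpCoeff q z k • (T ^ k) s‖
        ≤ ((q : ℝ) / ‖z‖) ^ (q - k) * (C ^ (q - k) * ‖w‖) := by
          rw [norm_smul]
          gcongr
          exacts [norm_normalizedExpCoeff_le_of_le hz hk, hs_le k hk]
      _ = (q * C / ‖z‖) ^ (q - k) * ‖w‖ := by rw [← mul_assoc, ← mul_pow, div_mul_eq_mul_div]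
  refine ⟨(q ! / z ^ q : 𝕜) • s,
    ∑ j ∈ range m, normalizedExpCoeff q z (q + (j + 1)) • (T ^ (j + 1)) w, ?_, ?_, ?_, ?_⟩
  · refine (map_sum _ _ _).trans (sum_eq_zero fun j _ => ?_)
    rw [map_smul, ← mul_apply_eq_comp, ← pow_add, show m + (j + 1) = j + (m + 1) by omega,
      pow_add, mul_apply_eq_comp, hw, map_zero, smul_zero]
  · simpa [normalizedExpCoeff] using hhead 0 q.zero_le
  · rw [sum_mul]
    refine (norm_sum_le _ _).trans (sum_le_sum fun j _ => ?_)
    rw [norm_smul, mul_assoc]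
    gcongr
    exacts [norm_normalizedExpCoeff_add_le hz q (j + 1), ContinuousLinearMap.le_opNorm _ _]
  · rw [exp_smul_apply_eq_sum_add_sum hz hs hw, sub_sub, add_assoc, add_sub_cancel_right, sum_mul]
    exact (norm_sum_le _ _).trans (sum_le_sum fun k hk => hhead k (mem_range.1 hk).le)

theorem exists_norm_exp_smul_apply_sub_sub_le_of_le_norm {T : X →L[𝕜] X} {C : ℝ} (hC : 0 < C)
    (hT : ∀ y, ∃ x, T x = y ∧ ‖x‖ ≤ C * ‖y‖) {a : ℝ} (ha₀ : 0 < a) (ha : a ≤ 1 / 2) {z : 𝕜}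
    (hz : C / a ≤ ‖z‖) (m : ℕ) {w : X} (hw : (T ^ (m + 1)) w = 0) :
    ∃ r E, (T ^ m) E = 0 ∧ ‖r‖ ≤ a * ‖w‖ ∧
      ‖E‖ ≤ (∑ j ∈ range m, (C / a) ^ (j + 1) * ‖T ^ (j + 1)‖) * ‖w‖ ∧
      ‖exp (z • T) r - w - E‖ ≤ 2 * a * ‖w‖ := by
  obtain ⟨q, hq₁, hqa, hqb⟩ :=
    exists_nat_div_le_and_div_add_one_le (x := ‖z‖) (div_pos ha₀ hC) (by rwa [inv_div])
  replace hqa : q * C / ‖z‖ ≤ a := by rwa [mul_div_right_comm, ← le_div_iff₀ hC]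
  rw [inv_div] at hqb
  have hz₀ : z ≠ 0 := norm_pos_iff.1 <| (div_pos hC ha₀).trans_le hz
  obtain ⟨r, E, hE, hr, hE_le, happrox⟩ :=
    exists_norm_exp_smul_apply_sub_sub_le hC.le hT hz₀ q m hw
  refine ⟨r, E, hE, hr.trans ?_, hE_le.trans ?_, happrox.trans ?_⟩
  · gcongr
    exact (pow_le_of_le_one (by positivity) (by linarith) (by omega)).trans hqa
  · gcongr
  · gcongr
    exact (sum_range_pow_sub_le (by positivity) (hqa.trans ha) q).trans (by linarith)

theorem exists_forall_norm_exp_smul_apply_sub_le {T : X →L[𝕜] X} (hT : Function.Surjective T)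
    (m : ℕ) {ε : ℝ} (hε : 0 < ε) :
    ∃ R, ∀ z : 𝕜, R ≤ ‖z‖ → ∀ w, (T ^ m) w = 0 →
      ∃ r, ‖r‖ ≤ ε * ‖w‖ ∧ ‖exp (z • T) r - w‖ ≤ ε * ‖w‖ := by
  obtain ⟨C, hC, hCT⟩ := T.exists_preimage_norm_le hT
  induction m generalizing ε with
  | zero => exact ⟨0, fun z _ w hw => ⟨0, by simp_all⟩⟩
  | succ m ih =>
    set a := min (1 / 2) (ε / 4)
    have ha : 0 < a := by positivity
    set B := ∑ j ∈ range m, (C / a) ^ (j + 1) * ‖T ^ (j + 1)‖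
    obtain ⟨R, hR⟩ := ih (ε := ε / (2 * (B + 1))) (by positivity)
    refine ⟨max R (C / a), fun z hz w hw => ?_⟩
    obtain ⟨r₁, E, hE, hr₁, hE_le, happrox⟩ := exists_norm_exp_smul_apply_sub_sub_le_of_le_norm
      hC hCT ha (min_le_left _ _) (le_of_max_le_right hz) m hw
    obtain ⟨r₂, hr₂, hr₂_approx⟩ := hR z (le_of_max_le_left hz) E hE
    have ha_quarter : a * ‖w‖ ≤ ε / 4 * ‖w‖ := by gcongr; exact min_le_right _ _
    have hE' : ε / (2 * (B + 1)) * ‖E‖ ≤ ε / 2 * ‖w‖ :=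
      calc ε / (2 * (B + 1)) * ‖E‖ ≤ ε / (2 * (B + 1)) * (B * ‖w‖) :=
            mul_le_mul_of_nonneg_left hE_le (by positivity)
        _ ≤ ε / 2 * ‖w‖ := by
            rw [div_mul_eq_mul_div, div_le_iff₀ (by positivity)]
            nlinarith [mul_nonneg hε.le (norm_nonneg w)]
    refine ⟨r₁ - r₂, ?_, ?_⟩
    · calc ‖r₁ - r₂‖ ≤ ‖r₁‖ + ‖r₂‖ := norm_sub_le _ _
        _ ≤ ε * ‖w‖ := by linarith [mul_nonneg hε.le (norm_nonneg w)]
    · calc ‖exp (z • T) (r₁ - r₂) - w‖ = ‖(exp (z • T) r₁ - w - E) - (exp (z • T) r₂ - E)‖ := by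
            rw [map_sub]; abel_nf
        _ ≤ ‖exp (z • T) r₁ - w - E‖ + ‖exp (z • T) r₂ - E‖ := norm_sub_le _ _
        _ ≤ ε * ‖w‖ := by linarith

theorem exists_norm_sub_lt_and_norm_iterate_exp_smul_apply_sub_lt {T : X →L[𝕜] X}
    (hT : Function.Surjective T) {t : 𝕜} (ht : t ≠ 0) {m₁ m₂ : ℕ} {u w : X}
    (hu : (T ^ m₁) u = 0) (hw : (T ^ m₂) w = 0) {δ : ℝ} (hδ : 0 < δ) :
    ∃ n y, ‖y - u‖ < δ ∧ ‖(⇑(exp (t • T)))^[n] y - w‖ < δ := by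
  set ε := δ / (‖u‖ + ‖w‖ + 1)
  have hε : ε * ‖u‖ + ε * ‖w‖ < δ := by
    rw [← mul_add, div_mul_eq_mul_div, div_lt_iff₀ (by positivity)]
    nlinarith
  obtain ⟨R₁, hR₁⟩ := exists_forall_norm_exp_smul_apply_sub_le hT m₁ (by positivity : 0 < ε)
  obtain ⟨R₂, hR₂⟩ := exists_forall_norm_exp_smul_apply_sub_le hT m₂ (by positivity : 0 < ε)
  obtain ⟨n, hn⟩ := exists_nat_ge (max R₁ R₂ / ‖t‖)
  set z := (n : 𝕜) * t
  have hz : max R₁ R₂ ≤ ‖z‖ := by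
    rwa [norm_mul, RCLike.norm_natCast, ← div_le_iff₀ (norm_pos_iff.2 ht)]
  obtain ⟨r₁, hr₁, hr₁_approx⟩ := hR₁ (-z) (by rw [norm_neg]; exact le_of_max_le_left hz) u hu
  obtain ⟨r₂, hr₂, hr₂_approx⟩ := hR₂ z (le_of_max_le_right hz) w hw
  have hiter : (⇑(exp (t • T)))^[n] = exp (z • T) := by
    rw [← FunLike.coe_pow_eq_iterate]
    exact congrArg _ (exp_smul_pow T t n)
  refine ⟨n, exp (-z • T) r₁ + r₂, ?_, ?_⟩
  · calc ‖exp (-z • T) r₁ + r₂ - u‖ = ‖(exp (-z • T) r₁ - u) + r₂‖ := by abel_nf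
      _ ≤ ‖exp (-z • T) r₁ - u‖ + ‖r₂‖ := norm_add_le _ _
      _ < δ := by linarith
  · have hinv : exp (z • T) (exp (-z • T) r₁) = r₁ :=
      DFunLike.congr_fun (exp_smul_mul_exp_neg_smul T z) r₁
    calc ‖(⇑(exp (t • T)))^[n] (exp (-z • T) r₁ + r₂) - w‖ = ‖r₁ + (exp (z • T) r₂ - w)‖ := by
          rw [hiter, map_add, hinv, add_sub_assoc]
      _ ≤ ‖r₁‖ + ‖exp (z • T) r₂ - w‖ := norm_add_le _ _
      _ < δ := by linarith

theorem exists_inter_preimage_iterate_exp_smul_nonempty {T : X →L[𝕜] X}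
    (hT : Function.Surjective T)
    (hdense : Dense (⋃ n : ℕ, (LinearMap.ker ((T ^ n : X →L[𝕜] X) : X →ₗ[𝕜] X) : Set X)))
    {t : 𝕜} (ht : t ≠ 0) {U V : Set X} (hU : IsOpen U) (hU_ne : U.Nonempty) (hV : IsOpen V)
    (hV_ne : V.Nonempty) :
    ∃ n, (U ∩ (⇑(exp (t • T)))^[n] ⁻¹' V).Nonempty := by
  obtain ⟨u, huU, hu⟩ := hdense.inter_open_nonempty U hU hU_ne
  obtain ⟨w, hwV, hw⟩ := hdense.inter_open_nonempty V hV hV_ne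
  obtain ⟨m₁, hm₁⟩ := mem_iUnion.1 hu
  obtain ⟨m₂, hm₂⟩ := mem_iUnion.1 hw
  obtain ⟨δ₁, hδ₁, hballU⟩ := Metric.isOpen_iff.1 hU u huU
  obtain ⟨δ₂, hδ₂, hballV⟩ := Metric.isOpen_iff.1 hV w hwV
  obtain ⟨n, y, hyu, hyw⟩ := exists_norm_sub_lt_and_norm_iterate_exp_smul_apply_sub_lt hT ht
    (LinearMap.mem_ker.1 hm₁) (LinearMap.mem_ker.1 hm₂) (lt_min hδ₁ hδ₂)
  exact ⟨n, y, hballU (mem_ball_iff_norm.2 (hyu.trans_le (min_le_left _ _))),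
    hballV (mem_ball_iff_norm.2 (hyw.trans_le (min_le_right _ _)))⟩

end Operator

theorem exp_of_nilpotent_approx_hypercyclic_general
    {X : Type*} [NormedAddCommGroup X] [NormedSpace ℂ X] [CompleteSpace X]
    [TopologicalSpace.SeparableSpace X]
    (P : X →L[ℂ] X) (lam : ℂ)
    (hdense : Dense (⋃ n : ℕ, (LinearMap.ker (((P - lam • (1 : X →L[ℂ] X)) ^ n : X →L[ℂ] X) : X →ₗ[ℂ] X) : Set X)))
    (hsurj : Function.Surjective (P - lam • (1 : X →L[ℂ] X)))
    (t : ℂ) (ht : t ≠ 0) :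
    ∃ f : X, Dense (Set.range fun n : ℕ =>
      ((NormedSpace.exp (t • (P - lam • (1 : X →L[ℂ] X)))) ^ n) f) := by
  simp only [FunLike.coe_pow_eq_iterate]
  exact exists_dense_orbit_of_forall_exists_iterate (ContinuousLinearMap.continuous _)
    fun _ _ hU hU_ne hV hV_ne =>
      exists_inter_preimage_iterate_exp_smul_nonempty hsurj hdense ht hU hU_ne hV hV_ne

/-- Herzog–Schmoeger application: if `X` is a separable infinite-dimensional Banach space,
`‖P − λI‖ ≤ 1`, `⋃ₙ ker((P−λI)ⁿ)` is dense, and `P − λI` is surjective, then for every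
`t ≠ 0` the operator `e^{t(P−λI)}` is hypercyclic on `X`. -/
theorem exp_of_nilpotent_approx_hypercyclic
    {X : Type*} [NormedAddCommGroup X] [NormedSpace ℂ X] [CompleteSpace X]
    [TopologicalSpace.SeparableSpace X] (hinf : ¬ FiniteDimensional ℂ X)
    (P : X →L[ℂ] X) (lam : ℂ)
    (hnorm : ‖P - lam • (1 : X →L[ℂ] X)‖ ≤ 1)
    (hdense : Dense (⋃ n : ℕ, (LinearMap.ker (((P - lam • (1 : X →L[ℂ] X)) ^ n : X →L[ℂ] X) : X →ₗ[ℂ] X) : Set X)))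
    (hsurj : Function.Surjective (P - lam • (1 : X →L[ℂ] X)))
    (t : ℂ) (ht : t ≠ 0) :
    ∃ f : X, Dense (Set.range fun n : ℕ =>
      ((NormedSpace.exp (t • (P - lam • (1 : X →L[ℂ] X)))) ^ n) f) :=
  exp_of_nilpotent_approx_hypercyclic_general P lam hdense hsurj t ht
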